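/- Suppose |Yᵢ| ≤ k₁ almost surely for all i, that 1/pᵢ(e) ≤ k₂ for all i and e ∈ {a, b}, and that P(dᵢ = e, dⱼ = e) > 0 for all i ≠ j and e ∈ {a, b}. Define C(e), E(e), U(e) as the design dependence, correlated-error, and unit-error terms: C(e) = (1/n²)ΣᵢΣ_{j≠i}|Cov(1{dᵢ=e}, 1{dⱼ=e})|, E(e) = (1/n²)ΣᵢΣ_{j≠i} ε̃ᵢⱼ(e,e)ε̃ⱼᵢ(e,e), U(e) = (1/n²)ΣᵢΣ_{j≠i} Cov(ε̇ᵢⱼ, ε̇ⱼᵢ | dᵢ = e, dⱼ = e), and write [x]⁺ = max(x, 0). Then the root mean square error satisfies √(E[(τ̂ − τ̄)²]) ≤ 3k₁√(k₂/n) + 5k₁k₂(√C(a) + √C(b)) + 2(√([E(a)]⁺) + √([E(b)]⁺) + √([U(a)]⁺) + √([U(b)]⁺)). -/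

import Mathlib

open MeasureTheory ProbabilityTheory Real Finset

/-- Covariance of two real random variables under a measure `P`. -/
noncomputable def cov {Ω : Type*} [MeasurableSpace Ω] (P : MeasureTheory.Measure Ω)
    (X Y : Ω → ℝ) : ℝ :=
  (∫ ω, X ω * Y ω ∂P) - (∫ ω, X ω ∂P) * ∫ ω, Y ω ∂P

/-- Covariance of two real random variables under the conditional measure `P(·|A)`. -/
noncomputable def condCov {Ω : Type*} [MeasurableSpace Ω] (P : MeasureTheory.Measure Ω)
    (A : Set Ω) (X Y : Ω → ℝ) : ℝ :=
  (∫ ω, X ω * Y ω ∂(P[|A])) - (∫ ω, X ω ∂(P[|A])) * ∫ ω, Y ω ∂(P[|A])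

/-!
For one exposure, the Horvitz–Thompson error splits unit by unit as
`1{Sᵢ}Yᵢ/pᵢ - ȳᵢ = ȳᵢ (1{Sᵢ} - pᵢ)/pᵢ + 1{Sᵢ}(Yᵢ - ȳᵢ)/pᵢ`, and Minkowski's inequality bounds the
two sums separately. In the first, the cross moments are `ȳᵢȳⱼ Cov(1ᵢ, 1ⱼ)/(pᵢpⱼ)`. In the
second, the cross moments are
`P(Sᵢ ∩ Sⱼ)/(pᵢpⱼ) · E[(Yᵢ - ȳᵢ)(Yⱼ - ȳⱼ) | Sᵢ ∩ Sⱼ]`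
`= (1 + Cov(1ᵢ, 1ⱼ)/(pᵢpⱼ)) (ε̃ᵢⱼε̃ⱼᵢ + Cov(Yᵢ, Yⱼ | Sᵢ ∩ Sⱼ))`.
The diagonal terms of the two sums are at most `k₂ȳᵢ²` and `k₂(k₁² - ȳᵢ²)`, so `√a + √b ≤ √2 √(a + b)`
turns them into `√2 k₁ √(k₂/n)`. A last application of Minkowski's inequality combines the
exposures `a` and `b`, and `2√2 ≤ 3`.
-/

lemma Real.sqrt_add_le_add_sqrt {x y : ℝ} (hx : 0 ≤ x) (hy : 0 ≤ y) : √(x + y) ≤ √x + √y := by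
  rw [Real.sqrt_le_left (by positivity)]
  nlinarith [Real.sq_sqrt hx, Real.sq_sqrt hy, Real.sqrt_nonneg x, Real.sqrt_nonneg y]

lemma Real.sqrt_add_sqrt_le_sqrt_two_mul {x y : ℝ} (hx : 0 ≤ x) (hy : 0 ≤ y) :
    √x + √y ≤ √2 * √(x + y) := by
  rw [← Real.sqrt_mul zero_le_two, Real.le_sqrt (by positivity) (by positivity)]
  nlinarith [Real.sq_sqrt hx, Real.sq_sqrt hy, sq_nonneg (√x - √y)]

lemma Real.sqrt_div_sq (x : ℝ) {n : ℝ} (hn : 0 ≤ n) : √(x / n ^ 2) = √x / n := by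
  rw [Real.sqrt_div' x (sq_nonneg n), Real.sqrt_sq hn]

section SecondMoments

variable {Ω : Type*} [MeasurableSpace Ω] {μ : Measure Ω}

lemma integral_mul_le_sqrt_mul_sqrt {f g : Ω → ℝ} (hf : MemLp f 2 μ) (hg : MemLp g 2 μ) :
    ∫ ω, f ω * g ω ∂μ ≤ √(∫ ω, f ω ^ 2 ∂μ) * √(∫ ω, g ω ^ 2 ∂μ) := by
  set A := ∫ ω, f ω ^ 2 ∂μ
  set B := ∫ ω, g ω ^ 2 ∂μ
  set C := ∫ ω, f ω * g ω ∂μ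
  have hfg : Integrable (fun ω => f ω * g ω) μ := hf.integrable_mul hg
  have hquad : ∀ t : ℝ, 0 ≤ A * (t * t) + 2 * C * t + B := fun t => by
    have hexp : ∫ ω, (t * f ω + g ω) ^ 2 ∂μ = A * (t * t) + 2 * C * t + B := by
      have hpt : ∀ ω, (t * f ω + g ω) ^ 2 = t ^ 2 * f ω ^ 2 + 2 * t * (f ω * g ω) + g ω ^ 2 :=
        fun ω => by ring
      simp_rw [hpt]
      rw [integral_add ((hf.integrable_sq.const_mul _).fun_add (hfg.const_mul _)) hg.integrable_sq,
        integral_add (hf.integrable_sq.const_mul _) (hfg.const_mul _), integral_const_mul,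
        integral_const_mul]
      ring
    exact hexp ▸ integral_nonneg fun ω => sq_nonneg _
  have hCS : C ^ 2 ≤ A * B := by
    have := discrim_le_zero hquad
    rw [discrim] at this
    nlinarith
  calc C ≤ √(C ^ 2) := Real.le_sqrt_of_sq_le le_rfl
    _ ≤ √(A * B) := Real.sqrt_le_sqrt hCS
    _ = √A * √B := Real.sqrt_mul (integral_nonneg fun ω => sq_nonneg _) B

lemma sqrt_integral_add_sq_le {f g : Ω → ℝ} (hf : MemLp f 2 μ) (hg : MemLp g 2 μ) :
    √(∫ ω, (f ω + g ω) ^ 2 ∂μ) ≤ √(∫ ω, f ω ^ 2 ∂μ) + √(∫ ω, g ω ^ 2 ∂μ) := by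
  have hA : 0 ≤ ∫ ω, f ω ^ 2 ∂μ := integral_nonneg fun ω => sq_nonneg _
  have hB : 0 ≤ ∫ ω, g ω ^ 2 ∂μ := integral_nonneg fun ω => sq_nonneg _
  have hexp : ∫ ω, (f ω + g ω) ^ 2 ∂μ
      = ∫ ω, f ω ^ 2 ∂μ + 2 * ∫ ω, f ω * g ω ∂μ + ∫ ω, g ω ^ 2 ∂μ := by
    have hfg : Integrable (fun ω => f ω * g ω) μ := hf.integrable_mul hg
    simp_rw [add_sq, mul_assoc]
    rw [integral_add (hf.integrable_sq.fun_add (hfg.const_mul _)) hg.integrable_sq,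
      integral_add hf.integrable_sq (hfg.const_mul _), integral_const_mul]
  rw [Real.sqrt_le_left (by positivity), hexp]
  nlinarith [integral_mul_le_sqrt_mul_sqrt hf hg, Real.sq_sqrt hA, Real.sq_sqrt hB]

lemma sqrt_integral_sub_sq_le {f g : Ω → ℝ} (hf : MemLp f 2 μ) (hg : MemLp g 2 μ) :
    √(∫ ω, (f ω - g ω) ^ 2 ∂μ) ≤ √(∫ ω, f ω ^ 2 ∂μ) + √(∫ ω, g ω ^ 2 ∂μ) := by
  simpa only [sub_eq_add_neg, Pi.neg_apply, neg_sq] using sqrt_integral_add_sq_le hf hg.neg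

lemma integral_sq_sum_le {ι : Type*} [Fintype ι] [DecidableEq ι] {f : ι → Ω → ℝ}
    (hf : ∀ i, MemLp (f i) 2 μ) {a : ι → ℝ} {b : ι → ι → ℝ}
    (ha : ∀ i, ∫ ω, f i ω * f i ω ∂μ ≤ a i) (hb : ∀ i j, i ≠ j → ∫ ω, f i ω * f j ω ∂μ ≤ b i j) :
    ∫ ω, (∑ i, f i ω) ^ 2 ∂μ ≤ ∑ i, a i + ∑ i, ∑ j ∈ univ.erase i, b i j := by
  have hint : ∀ i j, Integrable (fun ω => f i ω * f j ω) μ := fun i j =>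
    (hf i).integrable_mul (hf j)
  simp_rw [sq, Finset.sum_mul_sum]
  rw [integral_finsetSum _ fun i _ => integrable_finsetSum _ fun j _ => hint i j,
    ← Finset.sum_add_distrib]
  refine Finset.sum_le_sum fun i _ => ?_
  rw [integral_finsetSum _ fun j _ => hint i j, ← Finset.add_sum_erase _ _ (mem_univ i)]
  exact add_le_add (ha i) (Finset.sum_le_sum fun j hj => hb i j (Finset.ne_of_mem_erase hj).symm)

lemma abs_integral_le_of_abs_le [IsZeroOrProbabilityMeasure μ] {f : Ω → ℝ} {B : ℝ}
    (hB : 0 ≤ B) (hf : ∀ᵐ ω ∂μ, |f ω| ≤ B) : |∫ ω, f ω ∂μ| ≤ B := by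
  calc |∫ ω, f ω ∂μ| ≤ B * μ.real Set.univ := norm_integral_le_of_norm_le_const (f := f) hf
    _ ≤ B := mul_le_of_le_one_right hB measureReal_le_one

lemma integral_sub_mul_sub [IsProbabilityMeasure μ] {X Z : Ω → ℝ} (hX : MemLp X 2 μ)
    (hZ : MemLp Z 2 μ) (a b : ℝ) :
    ∫ ω, (X ω - a) * (Z ω - b) ∂μ = cov μ X Z + (∫ ω, X ω ∂μ - a) * (∫ ω, Z ω ∂μ - b) := by
  have hX1 := hX.integrable one_le_two
  have hZ1 := hZ.integrable one_le_two
  have hXZ : Integrable (fun ω => X ω * Z ω) μ := hX.integrable_mul hZ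
  have hexp : ∀ ω, (X ω - a) * (Z ω - b) = X ω * Z ω - b * X ω - a * Z ω + a * b := fun ω => by
    ring
  simp_rw [hexp]
  rw [integral_add ((hXZ.sub' (hX1.const_mul _)).sub' (hZ1.const_mul _)) (integrable_const _),
    integral_sub (hXZ.sub' (hX1.const_mul _)) (hZ1.const_mul _),
    integral_sub hXZ (hX1.const_mul _), integral_const_mul, integral_const_mul, integral_const,
    probReal_univ, cov]
  simp only [smul_eq_mul]
  ring

lemma cov_sub_const_sub_const [IsProbabilityMeasure μ] {X Z : Ω → ℝ} (hX : MemLp X 2 μ)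
    (hZ : MemLp Z 2 μ) (a b : ℝ) :
    cov μ (fun ω => X ω - a) (fun ω => Z ω - b) = cov μ X Z := by
  rw [cov, integral_sub_mul_sub hX hZ, integral_sub (hX.integrable one_le_two) (integrable_const _),
    integral_sub (hZ.integrable one_le_two) (integrable_const _)]
  simp [integral_const]

lemma cov_congr_ae {X X' Z Z' : Ω → ℝ} (hX : X =ᵐ[μ] X') (hZ : Z =ᵐ[μ] Z') :
    cov μ X Z = cov μ X' Z' := by
  have hXZ : (fun ω => X ω * Z ω) =ᵐ[μ] fun ω => X' ω * Z' ω := hX.mul hZ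
  rw [cov, cov, integral_congr_ae hX, integral_congr_ae hZ, integral_congr_ae hXZ]

lemma cov_indicator_one {S T : Set Ω} (hS : MeasurableSet S) (hT : MeasurableSet T) :
    cov μ (S.indicator 1) (T.indicator 1) = μ.real (S ∩ T) - μ.real S * μ.real T := by
  have hmul : (fun ω => S.indicator (1 : Ω → ℝ) ω * T.indicator 1 ω) = (S ∩ T).indicator 1 := by
    ext ω
    by_cases hωS : ω ∈ S <;> by_cases hωT : ω ∈ T <;> simp [hωS, hωT]
  rw [cov, hmul, integral_indicator_one (hS.inter hT), integral_indicator_one hS,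
    integral_indicator_one hT]

end SecondMoments

section Conditioning

variable {Ω : Type*} [MeasurableSpace Ω] {P : Measure Ω}

lemma integral_indicator_eq_measureReal_mul_integral_cond [IsFiniteMeasure P] {S : Set Ω}
    (hS : MeasurableSet S) (f : Ω → ℝ) :
    ∫ ω, S.indicator f ω ∂P = P.real S * ∫ ω, f ω ∂P[|S] := by
  rw [integral_indicator hS]
  rcases eq_or_ne (P S) 0 with h | h
  · simp [Measure.restrict_eq_zero.mpr h, measureReal_def, h]
  · rw [ProbabilityTheory.cond, integral_smul_measure, ENNReal.toReal_inv, smul_eq_mul,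
      ← measureReal_def, ← mul_assoc, mul_inv_cancel₀ ((measureReal_ne_zero_iff).mpr h), one_mul]

lemma abs_integral_cond_le [IsProbabilityMeasure P] {f : Ω → ℝ} {B : ℝ}
    (hf : ∀ᵐ ω ∂P, |f ω| ≤ B) (S : Set Ω) : |∫ ω, f ω ∂P[|S]| ≤ B := by
  obtain ⟨ω, hω⟩ := hf.exists
  exact abs_integral_le_of_abs_le ((abs_nonneg _).trans hω) (cond_absolutelyContinuous.ae_le hf)

lemma memLp_cond_of_abs_le {Y : Ω → ℝ} {B : ℝ} (hY : AEStronglyMeasurable Y P)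
    (hYb : ∀ᵐ ω ∂P, |Y ω| ≤ B) (S : Set Ω) (p : ENNReal) : MemLp Y p P[|S] :=
  MemLp.of_bound (hY.mono_ac cond_absolutelyContinuous) B (cond_absolutelyContinuous.ae_le hYb)

lemma sq_integral_cond_le [IsProbabilityMeasure P] {f : Ω → ℝ} {B : ℝ}
    (hf : ∀ᵐ ω ∂P, |f ω| ≤ B) (S : Set Ω) : (∫ ω, f ω ∂P[|S]) ^ 2 ≤ B ^ 2 :=
  sq_le_sq' (abs_le.mp (abs_integral_cond_le hf S)).1 (abs_le.mp (abs_integral_cond_le hf S)).2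

lemma abs_integral_cond_sub_mul_sub_le [IsProbabilityMeasure P] {Y Z : Ω → ℝ} {B y z : ℝ}
    (hY : ∀ᵐ ω ∂P, |Y ω| ≤ B) (hZ : ∀ᵐ ω ∂P, |Z ω| ≤ B) (hy : |y| ≤ B) (hz : |z| ≤ B)
    (S : Set Ω) : |∫ ω, (Y ω - y) * (Z ω - z) ∂P[|S]| ≤ (2 * B) ^ 2 := by
  refine abs_integral_cond_le (hY.and hZ |>.mono fun ω ⟨hYω, hZω⟩ => ?_) S
  rw [abs_mul, sq, two_mul]
  exact mul_le_mul ((abs_sub _ _).trans (add_le_add hYω hy))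
    ((abs_sub _ _).trans (add_le_add hZω hz)) (abs_nonneg _) (by linarith [abs_nonneg y])

end Conditioning

section HorvitzThompsonUnit

variable {Ω : Type*} [MeasurableSpace Ω] {P : Measure Ω} [IsProbabilityMeasure P]
  {S T : Set Ω} {Y Z : Ω → ℝ} {k₁ k₂ : ℝ}

variable (P S Y) in
noncomputable def htDesignPart (ω : Ω) : ℝ :=
  (∫ x, Y x ∂P[|S]) / P.real S * (S.indicator 1 ω - P.real S)

variable (P S Y) in
noncomputable def htOutcomePart (ω : Ω) : ℝ :=
  S.indicator (fun x => Y x - ∫ x, Y x ∂P[|S]) ω / P.real S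

/-- Also when `P S = 0`: then `P[|S] = 0` and every term vanishes since `x / 0 = 0`. -/
lemma htDesignPart_add_htOutcomePart (S : Set Ω) (Y : Ω → ℝ) (ω : Ω) :
    htDesignPart P S Y ω + htOutcomePart P S Y ω
      = S.indicator Y ω / P.real S - ∫ x, Y x ∂P[|S] := by
  rcases eq_or_ne (P S) 0 with h | h
  · simp [htDesignPart, htOutcomePart, measureReal_def, h, cond_eq_zero_of_meas_eq_zero h]
  · have hp : P.real S ≠ 0 := (measureReal_ne_zero_iff).mpr h
    by_cases hω : ω ∈ S
    · simp only [htDesignPart, htOutcomePart, Set.indicator_of_mem hω, Pi.one_apply]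
      field_simp
      ring
    · simp only [htDesignPart, htOutcomePart, Set.indicator_of_notMem hω]
      field_simp
      ring

lemma memLp_htDesignPart (hS : MeasurableSet S) : MemLp (htDesignPart P S Y) 2 P := by
  have h1 : MemLp (S.indicator (1 : Ω → ℝ)) 2 P := (memLp_const (1 : ℝ)).indicator hS
  have hI : MemLp (fun ω => S.indicator (1 : Ω → ℝ) ω - P.real S) 2 P :=
    h1.sub (memLp_const (P.real S))
  exact hI.const_mul ((∫ x, Y x ∂P[|S]) / P.real S)

lemma memLp_htOutcomePart (hS : MeasurableSet S) (hY : MemLp Y 2 P) :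
    MemLp (htOutcomePart P S Y) 2 P := by
  have hI : MemLp (S.indicator fun ω => Y ω - ∫ x, Y x ∂P[|S]) 2 P :=
    (hY.sub (memLp_const _)).indicator hS
  unfold htOutcomePart
  simp_rw [div_eq_mul_inv]
  exact hI.mul_const _

lemma integral_htDesignPart_mul (hS : MeasurableSet S) (hT : MeasurableSet T) :
    ∫ ω, htDesignPart P S Y ω * htDesignPart P T Z ω ∂P
      = (∫ x, Y x ∂P[|S]) / P.real S * ((∫ x, Z x ∂P[|T]) / P.real T)
        * cov P (S.indicator 1) (T.indicator 1) := by
  have hIS : MemLp (S.indicator (1 : Ω → ℝ)) 2 P := (memLp_const 1).indicator hS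
  have hIT : MemLp (T.indicator (1 : Ω → ℝ)) 2 P := (memLp_const 1).indicator hT
  simp_rw [htDesignPart, mul_mul_mul_comm _ (S.indicator 1 _ - _)]
  rw [integral_const_mul, integral_sub_mul_sub hIS hIT, integral_indicator_one hS,
    integral_indicator_one hT]
  ring

lemma integral_htOutcomePart_mul (hS : MeasurableSet S) (hT : MeasurableSet T) :
    ∫ ω, htOutcomePart P S Y ω * htOutcomePart P T Z ω ∂P
      = P.real (S ∩ T) / (P.real S * P.real T)
        * ∫ ω, (Y ω - ∫ x, Y x ∂P[|S]) * (Z ω - ∫ x, Z x ∂P[|T]) ∂P[|S ∩ T] := by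
  have hpt : ∀ ω, htOutcomePart P S Y ω * htOutcomePart P T Z ω
      = (S ∩ T).indicator (fun ω => (Y ω - ∫ x, Y x ∂P[|S]) * (Z ω - ∫ x, Z x ∂P[|T])) ω
        / (P.real S * P.real T) := fun ω => by
    by_cases hωS : ω ∈ S <;> by_cases hωT : ω ∈ T <;>
      simp [htOutcomePart, hωS, hωT, div_mul_div_comm]
  simp_rw [hpt]
  rw [integral_div, integral_indicator_eq_measureReal_mul_integral_cond (hS.inter hT)]
  ring

lemma integral_htDesignPart_mul_self_le (hS : MeasurableSet S) (hk : (P.real S)⁻¹ ≤ k₂) :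
    ∫ ω, htDesignPart P S Y ω * htDesignPart P S Y ω ∂P ≤ k₂ * (∫ x, Y x ∂P[|S]) ^ 2 := by
  rw [integral_htDesignPart_mul hS hS, cov_indicator_one hS hS, Set.inter_self]
  obtain hp | hp := (measureReal_nonneg : 0 ≤ P.real S).eq_or_lt
  · rw [← hp] at hk ⊢
    simp only [div_zero, zero_mul, inv_zero] at hk ⊢
    positivity
  · set y := ∫ x, Y x ∂P[|S]
    have hkey : y / P.real S * (y / P.real S) * (P.real S - P.real S * P.real S)
        = (P.real S)⁻¹ * y ^ 2 - y ^ 2 := by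
      field_simp
    rw [hkey]
    calc _ ≤ (P.real S)⁻¹ * y ^ 2 := sub_le_self _ (sq_nonneg y)
      _ ≤ k₂ * y ^ 2 := mul_le_mul_of_nonneg_right hk (sq_nonneg y)

lemma abs_integral_cond_div_le (hYb : ∀ᵐ ω ∂P, |Y ω| ≤ k₁) (hk : (P.real S)⁻¹ ≤ k₂) :
    |(∫ x, Y x ∂P[|S]) / P.real S| ≤ k₁ * k₂ := by
  rw [abs_div, abs_of_nonneg measureReal_nonneg, div_eq_mul_inv]
  exact mul_le_mul (abs_integral_cond_le hYb S) hk (inv_nonneg.mpr measureReal_nonneg)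
    ((abs_nonneg _).trans (abs_integral_cond_le hYb S))

lemma integral_htDesignPart_mul_le (hS : MeasurableSet S) (hT : MeasurableSet T)
    (hYb : ∀ᵐ ω ∂P, |Y ω| ≤ k₁) (hZb : ∀ᵐ ω ∂P, |Z ω| ≤ k₁)
    (hkS : (P.real S)⁻¹ ≤ k₂) (hkT : (P.real T)⁻¹ ≤ k₂) :
    ∫ ω, htDesignPart P S Y ω * htDesignPart P T Z ω ∂P
      ≤ (k₁ * k₂) ^ 2 * |cov P (S.indicator 1) (T.indicator 1)| := by
  rw [integral_htDesignPart_mul hS hT]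
  refine (le_abs_self _).trans ?_
  have hY := abs_integral_cond_div_le hYb hkS
  rw [abs_mul, abs_mul, sq]
  exact mul_le_mul_of_nonneg_right (mul_le_mul hY (abs_integral_cond_div_le hZb hkT)
    (abs_nonneg _) ((abs_nonneg _).trans hY)) (abs_nonneg _)

lemma integral_sub_cond_mul_self_le (hY : AEStronglyMeasurable Y P)
    (hYb : ∀ᵐ ω ∂P, |Y ω| ≤ k₁) (S : Set Ω) :
    ∫ ω, (Y ω - ∫ x, Y x ∂P[|S]) * (Y ω - ∫ x, Y x ∂P[|S]) ∂P[|S]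
      ≤ k₁ ^ 2 - (∫ x, Y x ∂P[|S]) ^ 2 := by
  rcases eq_or_ne (P S) 0 with h | h
  · calc _ = 0 := by simp [cond_eq_zero_of_meas_eq_zero h]
      _ ≤ _ := sub_nonneg.mpr (sq_integral_cond_le hYb S)
  · have := cond_isProbabilityMeasure (μ := P) h
    have hYS := memLp_cond_of_abs_le hY hYb S 2
    have hYY : ∀ᵐ ω ∂P, |Y ω * Y ω| ≤ k₁ ^ 2 := hYb.mono fun ω hω => by
      rw [abs_mul, sq]; exact mul_le_mul hω hω (abs_nonneg _) ((abs_nonneg _).trans hω)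
    rw [integral_sub_mul_sub hYS hYS, sub_self, mul_zero, add_zero, cov, sq]
    linarith [(abs_le.mp (abs_integral_cond_le hYY S)).2]

lemma integral_htOutcomePart_mul_self_le (hS : MeasurableSet S) (hY : AEStronglyMeasurable Y P)
    (hYb : ∀ᵐ ω ∂P, |Y ω| ≤ k₁) (hk : (P.real S)⁻¹ ≤ k₂) :
    ∫ ω, htOutcomePart P S Y ω * htOutcomePart P S Y ω ∂P
      ≤ k₂ * (k₁ ^ 2 - (∫ x, Y x ∂P[|S]) ^ 2) := by
  rw [integral_htOutcomePart_mul hS hS, Set.inter_self, div_self_mul_self']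
  exact mul_le_mul hk (integral_sub_cond_mul_self_le hY hYb S)
    (integral_nonneg fun ω => mul_self_nonneg _) ((inv_nonneg.mpr measureReal_nonneg).trans hk)

lemma integral_htOutcomePart_mul_le (hS : MeasurableSet S) (hT : MeasurableSet T)
    (hST : P (S ∩ T) ≠ 0) (hY : AEStronglyMeasurable Y P) (hYb : ∀ᵐ ω ∂P, |Y ω| ≤ k₁)
    (hZ : AEStronglyMeasurable Z P) (hZb : ∀ᵐ ω ∂P, |Z ω| ≤ k₁)
    (hkS : (P.real S)⁻¹ ≤ k₂) (hkT : (P.real T)⁻¹ ≤ k₂) :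
    ∫ ω, htOutcomePart P S Y ω * htOutcomePart P T Z ω ∂P
      ≤ cov P[|S ∩ T] Y Z
        + (∫ x, Y x ∂P[|S ∩ T] - ∫ x, Y x ∂P[|S]) * (∫ x, Z x ∂P[|T ∩ S] - ∫ x, Z x ∂P[|T])
        + (2 * k₁ * k₂) ^ 2 * |cov P (S.indicator 1) (T.indicator 1)| := by
  have := cond_isProbabilityMeasure (μ := P) hST
  have hp : ∀ U, S ∩ T ⊆ U → 0 < P.real U := fun U hU =>
    ENNReal.toReal_pos (fun h => hST (measure_mono_null hU h)) (measure_ne_top _ _)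
  have hpS := hp S Set.inter_subset_left
  have hpT := hp T Set.inter_subset_right
  have hq : P.real (S ∩ T) = P.real S * P.real T + cov P (S.indicator 1) (T.indicator 1) := by
    rw [cov_indicator_one hS hT]; ring
  set c := cov P (S.indicator 1) (T.indicator 1)
  set R := ∫ ω, (Y ω - ∫ x, Y x ∂P[|S]) * (Z ω - ∫ x, Z x ∂P[|T]) ∂P[|S ∩ T]
  have hR : R = cov P[|S ∩ T] Y Z
      + (∫ x, Y x ∂P[|S ∩ T] - ∫ x, Y x ∂P[|S]) * (∫ x, Z x ∂P[|T ∩ S] - ∫ x, Z x ∂P[|T]) := by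
    rw [Set.inter_comm T S]
    exact integral_sub_mul_sub (memLp_cond_of_abs_le hY hYb _ 2)
      (memLp_cond_of_abs_le hZ hZb _ 2) _ _
  have hRb : |R| ≤ (2 * k₁) ^ 2 := abs_integral_cond_sub_mul_sub_le hYb hZb
    (abs_integral_cond_le hYb S) (abs_integral_cond_le hZb T) _
  rw [integral_htOutcomePart_mul hS hT]
  change P.real (S ∩ T) / (P.real S * P.real T) * R ≤ _
  rw [← hR, hq, add_div, div_self (by positivity), one_add_mul]
  gcongr R + ?_
  calc c / (P.real S * P.real T) * R ≤ |c| * ((P.real S)⁻¹ * (P.real T)⁻¹) * |R| := by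
        rw [div_eq_mul_inv, mul_inv]
        refine (le_abs_self _).trans_eq ?_
        rw [abs_mul, abs_mul, abs_of_pos (by positivity : 0 < (P.real S)⁻¹ * (P.real T)⁻¹)]
    _ ≤ |c| * (k₂ * k₂) * (2 * k₁) ^ 2 := by
        have hk₂ : 0 ≤ k₂ := (inv_nonneg.mpr hpS.le).trans hkS
        gcongr
    _ = _ := by ring

end HorvitzThompsonUnit

section HorvitzThompson

variable {Ω ι : Type*} [MeasurableSpace Ω] {P : Measure Ω} [IsProbabilityMeasure P]
  [Fintype ι] {S : ι → Set Ω} {Y : ι → Ω → ℝ} {k₁ k₂ : ℝ}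

/-! For `Sᵢ = {dᵢ = e}`, `htError / n` is the `e`-part of `τ̂ - τ̄`, while `designDependence`,
`correlatedError` and `unitError` are `n²` times `C(e)`, `E(e)` and `U(e)`. -/

variable (P S Y) in
noncomputable def htError (ω : Ω) : ℝ :=
  ∑ i, ((S i).indicator (Y i) ω / P.real (S i) - ∫ x, Y i x ∂P[|S i])

lemma htError_eq_sum_add_sum (ω : Ω) :
    htError P S Y ω = ∑ i, htDesignPart P (S i) (Y i) ω + ∑ i, htOutcomePart P (S i) (Y i) ω := by
  rw [← sum_add_distrib]
  exact sum_congr rfl fun i _ => (htDesignPart_add_htOutcomePart _ _ _).symm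

lemma memLp_htError (hS : ∀ i, MeasurableSet (S i)) (hY : ∀ i, MemLp (Y i) 2 P) :
    MemLp (htError P S Y) 2 P := by
  rw [show htError P S Y = _ + _ from funext htError_eq_sum_add_sum]
  exact (memLp_finsetSum univ fun i _ => memLp_htDesignPart (hS i)).add
    (memLp_finsetSum univ fun i _ => memLp_htOutcomePart (hS i) (hY i))

variable [DecidableEq ι]

variable (P S) in
noncomputable def designDependence : ℝ :=
  ∑ i, ∑ j ∈ univ.erase i, |cov P ((S i).indicator 1) ((S j).indicator 1)|

variable (P S Y) in
noncomputable def correlatedError : ℝ :=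
  ∑ i, ∑ j ∈ univ.erase i, (∫ x, Y i x ∂P[|S i ∩ S j] - ∫ x, Y i x ∂P[|S i])
    * (∫ x, Y j x ∂P[|S j ∩ S i] - ∫ x, Y j x ∂P[|S j])

variable (P S Y) in
noncomputable def unitError : ℝ :=
  ∑ i, ∑ j ∈ univ.erase i, cov P[|S i ∩ S j] (Y i) (Y j)

lemma designDependence_nonneg (P : Measure Ω) (S : ι → Set Ω) : 0 ≤ designDependence P S :=
  sum_nonneg fun _ _ => sum_nonneg fun _ _ => abs_nonneg _

lemma integral_sq_sum_htDesignPart_le (hS : ∀ i, MeasurableSet (S i))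
    (hbdd : ∀ i, ∀ᵐ ω ∂P, |Y i ω| ≤ k₁) (hk : ∀ i, (P.real (S i))⁻¹ ≤ k₂) :
    ∫ ω, (∑ i, htDesignPart P (S i) (Y i) ω) ^ 2 ∂P
      ≤ k₂ * ∑ i, (∫ x, Y i x ∂P[|S i]) ^ 2 + (k₁ * k₂) ^ 2 * designDependence P S := by
  refine (integral_sq_sum_le (fun i => memLp_htDesignPart (hS i))
    (fun i => integral_htDesignPart_mul_self_le (hS i) (hk i))
    (fun i j _ => integral_htDesignPart_mul_le (hS i) (hS j) (hbdd i) (hbdd j) (hk i) (hk j))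
    ).trans_eq ?_
  simp only [designDependence, mul_sum]

lemma integral_sq_sum_htOutcomePart_le (hS : ∀ i, MeasurableSet (S i))
    (hY : ∀ i, AEStronglyMeasurable (Y i) P) (hbdd : ∀ i, ∀ᵐ ω ∂P, |Y i ω| ≤ k₁)
    (hk : ∀ i, (P.real (S i))⁻¹ ≤ k₂) (hpos : ∀ i j, i ≠ j → P (S i ∩ S j) ≠ 0) :
    ∫ ω, (∑ i, htOutcomePart P (S i) (Y i) ω) ^ 2 ∂P
      ≤ k₂ * ∑ i, (k₁ ^ 2 - (∫ x, Y i x ∂P[|S i]) ^ 2) + correlatedError P S Y + unitError P S Y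
        + (2 * k₁ * k₂) ^ 2 * designDependence P S := by
  have hYL2 : ∀ i, MemLp (Y i) 2 P := fun i => MemLp.of_bound (hY i) k₁ (hbdd i)
  refine (integral_sq_sum_le (fun i => memLp_htOutcomePart (hS i) (hYL2 i))
    (fun i => integral_htOutcomePart_mul_self_le (hS i) (hY i) (hbdd i) (hk i))
    (fun i j hij => integral_htOutcomePart_mul_le (hS i) (hS j) (hpos i j hij) (hY i) (hbdd i)
      (hY j) (hbdd j) (hk i) (hk j))).trans_eq ?_
  simp only [designDependence, correlatedError, unitError, mul_sum, sum_add_distrib]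
  ring

lemma sqrt_integral_sq_sum_htDesignPart_le (hk₁ : 0 ≤ k₁) (hk₂ : 0 ≤ k₂)
    (hS : ∀ i, MeasurableSet (S i)) (hbdd : ∀ i, ∀ᵐ ω ∂P, |Y i ω| ≤ k₁)
    (hk : ∀ i, (P.real (S i))⁻¹ ≤ k₂) :
    √(∫ ω, (∑ i, htDesignPart P (S i) (Y i) ω) ^ 2 ∂P)
      ≤ √(k₂ * ∑ i, (∫ x, Y i x ∂P[|S i]) ^ 2) + k₁ * k₂ * √(designDependence P S) := by
  have hD := designDependence_nonneg P S
  calc _ ≤ √(k₂ * ∑ i, (∫ x, Y i x ∂P[|S i]) ^ 2 + (k₁ * k₂) ^ 2 * designDependence P S) :=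
        Real.sqrt_le_sqrt (integral_sq_sum_htDesignPart_le hS hbdd hk)
    _ ≤ √(k₂ * ∑ i, (∫ x, Y i x ∂P[|S i]) ^ 2) + √((k₁ * k₂) ^ 2 * designDependence P S) :=
        Real.sqrt_add_le_add_sqrt (mul_nonneg hk₂ (sum_nonneg fun i _ => sq_nonneg _))
          (by positivity)
    _ = _ := by rw [Real.sqrt_mul (sq_nonneg _), Real.sqrt_sq (mul_nonneg hk₁ hk₂)]

lemma sqrt_integral_sq_sum_htOutcomePart_le (hk₁ : 0 ≤ k₁) (hk₂ : 0 ≤ k₂)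
    (hS : ∀ i, MeasurableSet (S i)) (hY : ∀ i, AEStronglyMeasurable (Y i) P)
    (hbdd : ∀ i, ∀ᵐ ω ∂P, |Y i ω| ≤ k₁) (hk : ∀ i, (P.real (S i))⁻¹ ≤ k₂)
    (hpos : ∀ i j, i ≠ j → P (S i ∩ S j) ≠ 0) :
    √(∫ ω, (∑ i, htOutcomePart P (S i) (Y i) ω) ^ 2 ∂P)
      ≤ √(k₂ * ∑ i, (k₁ ^ 2 - (∫ x, Y i x ∂P[|S i]) ^ 2)) + √(max (correlatedError P S Y) 0)
        + √(max (unitError P S Y) 0) + 2 * k₁ * k₂ * √(designDependence P S) := by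
  have hD := designDependence_nonneg P S
  have hA : 0 ≤ k₂ * ∑ i, (k₁ ^ 2 - (∫ x, Y i x ∂P[|S i]) ^ 2) :=
    mul_nonneg hk₂ (sum_nonneg fun i _ => sub_nonneg.mpr (sq_integral_cond_le (hbdd i) (S i)))
  calc _ ≤ √(k₂ * ∑ i, (k₁ ^ 2 - (∫ x, Y i x ∂P[|S i]) ^ 2) + max (correlatedError P S Y) 0
        + max (unitError P S Y) 0 + (2 * k₁ * k₂) ^ 2 * designDependence P S) := by
        refine Real.sqrt_le_sqrt ((integral_sq_sum_htOutcomePart_le hS hY hbdd hk hpos).trans ?_)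
        gcongr <;> exact le_max_left _ _
    _ ≤ √(k₂ * ∑ i, (k₁ ^ 2 - (∫ x, Y i x ∂P[|S i]) ^ 2)) + √(max (correlatedError P S Y) 0)
        + √(max (unitError P S Y) 0) + √((2 * k₁ * k₂) ^ 2 * designDependence P S) := by
        refine (Real.sqrt_add_le_add_sqrt (by positivity) (by positivity)).trans ?_
        gcongr
        refine (Real.sqrt_add_le_add_sqrt (by positivity) (by positivity)).trans ?_
        gcongr
        exact Real.sqrt_add_le_add_sqrt hA (le_max_right _ _)
    _ = _ := by rw [Real.sqrt_mul (sq_nonneg _), Real.sqrt_sq (by positivity)]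

lemma sqrt_integral_htError_sq_le [Nonempty ι] (hS : ∀ i, MeasurableSet (S i))
    (hY : ∀ i, AEStronglyMeasurable (Y i) P) (hbdd : ∀ i, ∀ᵐ ω ∂P, |Y i ω| ≤ k₁)
    (hk : ∀ i, (P.real (S i))⁻¹ ≤ k₂) (hpos : ∀ i j, i ≠ j → P (S i ∩ S j) ≠ 0) :
    √(∫ ω, htError P S Y ω ^ 2 ∂P)
      ≤ √2 * k₁ * √(Fintype.card ι * k₂) + 3 * k₁ * k₂ * √(designDependence P S)
        + √(max (correlatedError P S Y) 0) + √(max (unitError P S Y) 0) := by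
  obtain ⟨i₀⟩ := ‹Nonempty ι›
  obtain ⟨ω₀, hω₀⟩ := (hbdd i₀).exists
  have hk₁ : 0 ≤ k₁ := (abs_nonneg _).trans hω₀
  have hk₂ : 0 ≤ k₂ := (inv_nonneg.mpr measureReal_nonneg).trans (hk i₀)
  have hdiag : √(k₂ * ∑ i, (∫ x, Y i x ∂P[|S i]) ^ 2)
      + √(k₂ * ∑ i, (k₁ ^ 2 - (∫ x, Y i x ∂P[|S i]) ^ 2)) ≤ √2 * k₁ * √(Fintype.card ι * k₂) := by
    refine (Real.sqrt_add_sqrt_le_sqrt_two_mul (mul_nonneg hk₂ (sum_nonneg fun i _ => sq_nonneg _))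
      (mul_nonneg hk₂ (sum_nonneg fun i _ => sub_nonneg.mpr (sq_integral_cond_le (hbdd i) (S i))))
      ).trans_eq ?_
    rw [← mul_add, ← sum_add_distrib]
    simp only [add_sub_cancel, sum_const, card_univ, nsmul_eq_mul]
    rw [show k₂ * (Fintype.card ι * k₁ ^ 2) = k₁ ^ 2 * (Fintype.card ι * k₂) by ring,
      Real.sqrt_mul (sq_nonneg _), Real.sqrt_sq hk₁, mul_assoc]
  have hYL2 : ∀ i, MemLp (Y i) 2 P := fun i => MemLp.of_bound (hY i) k₁ (hbdd i)
  calc √(∫ ω, htError P S Y ω ^ 2 ∂P)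
      ≤ √(∫ ω, (∑ i, htDesignPart P (S i) (Y i) ω) ^ 2 ∂P)
        + √(∫ ω, (∑ i, htOutcomePart P (S i) (Y i) ω) ^ 2 ∂P) := by
        simp_rw [htError_eq_sum_add_sum]
        exact sqrt_integral_add_sq_le (memLp_finsetSum univ fun i _ => memLp_htDesignPart (hS i))
          (memLp_finsetSum univ fun i _ => memLp_htOutcomePart (hS i) (hYL2 i))
    _ ≤ _ := by
        linarith [sqrt_integral_sq_sum_htDesignPart_le hk₁ hk₂ hS hbdd hk,
          sqrt_integral_sq_sum_htOutcomePart_le hk₁ hk₂ hS hY hbdd hk hpos]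

lemma sqrt_integral_htError_div_sq_le [Nonempty ι] (hS : ∀ i, MeasurableSet (S i))
    (hY : ∀ i, AEStronglyMeasurable (Y i) P) (hbdd : ∀ i, ∀ᵐ ω ∂P, |Y i ω| ≤ k₁)
    (hk : ∀ i, (P.real (S i))⁻¹ ≤ k₂) (hpos : ∀ i j, i ≠ j → P (S i ∩ S j) ≠ 0) :
    √(∫ ω, (htError P S Y ω / Fintype.card ι) ^ 2 ∂P)
      ≤ √2 * k₁ * √(k₂ / Fintype.card ι)
        + 3 * k₁ * k₂ * √(designDependence P S / Fintype.card ι ^ 2)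
        + √(max (correlatedError P S Y / Fintype.card ι ^ 2) 0)
        + √(max (unitError P S Y / Fintype.card ι ^ 2) 0) := by
  set n : ℝ := (Fintype.card ι : ℝ)
  have hn : 0 < n := Nat.cast_pos.mpr Fintype.card_pos
  have hmax : ∀ x : ℝ, max (x / n ^ 2) 0 = max x 0 / n ^ 2 := fun x => by
    rw [← max_div_div_right (sq_nonneg n), zero_div]
  have hk₂n : k₂ / n = n * k₂ / n ^ 2 := by field_simp
  calc √(∫ ω, (htError P S Y ω / n) ^ 2 ∂P) = √(∫ ω, htError P S Y ω ^ 2 ∂P) / n := by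
        simp_rw [div_pow, integral_div, Real.sqrt_div_sq _ hn.le]
    _ ≤ (√2 * k₁ * √(n * k₂) + 3 * k₁ * k₂ * √(designDependence P S)
        + √(max (correlatedError P S Y) 0) + √(max (unitError P S Y) 0)) / n := by
        gcongr
        exact sqrt_integral_htError_sq_le hS hY hbdd hk hpos
    _ = _ := by
        rw [hk₂n, hmax, hmax, Real.sqrt_div_sq _ hn.le, Real.sqrt_div_sq _ hn.le,
          Real.sqrt_div_sq _ hn.le, Real.sqrt_div_sq _ hn.le]
        ring

end HorvitzThompson

section Exposures

variable {Ω ι Δ : Type*} [MeasurableSpace Ω] {P : Measure Ω} [Fintype ι] [DecidableEq ι]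
  {d : ι → Ω → Δ}

lemma designDependence_setOf_eq [DecidableEq Δ] (e : Δ) :
    designDependence P (fun i => {ω | d i ω = e})
      = ∑ i, ∑ j ∈ univ.erase i, |cov P (fun ω => if d i ω = e then (1 : ℝ) else 0)
          (fun ω => if d j ω = e then (1 : ℝ) else 0)| := by
  have hind : ∀ i, ({ω | d i ω = e} : Set Ω).indicator (1 : Ω → ℝ)
      = fun ω => if d i ω = e then 1 else 0 := fun i => by
    ext ω; simp [Set.indicator_apply]
  simp_rw [designDependence, hind]

variable [IsProbabilityMeasure P] [MeasurableSpace Δ] [MeasurableSingletonClass Δ]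
  {Y : ι → Ω → ℝ} {k₁ : ℝ}

/-- The conditional covariance of the residuals `Yᵢ - μᵢⱼ(dᵢ, dⱼ)` does not depend on the
centring `μ`. -/
lemma unitError_setOf_eq (hd : ∀ i, Measurable (d i)) (hY : ∀ i, AEStronglyMeasurable (Y i) P)
    (hbdd : ∀ i, ∀ᵐ ω ∂P, |Y i ω| ≤ k₁) {e : Δ}
    (hpos : ∀ i j, i ≠ j → P ({ω | d i ω = e} ∩ {ω | d j ω = e}) ≠ 0)
    {μ : ι → ι → Δ → Δ → ℝ} {ε : ι → ι → Ω → ℝ}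
    (hε : ∀ i j ω, ε i j ω = Y i ω - μ i j (d i ω) (d j ω)) :
    unitError P (fun i => {ω | d i ω = e}) Y
      = ∑ i, ∑ j ∈ univ.erase i,
          condCov P ({ω | d i ω = e} ∩ {ω | d j ω = e}) (ε i j) (ε j i) := by
  refine sum_congr rfl fun i _ => sum_congr rfl fun j hj => ?_
  set T := {ω | d i ω = e} ∩ {ω | d j ω = e}
  have := cond_isProbabilityMeasure (μ := P) (hpos i j (ne_of_mem_erase hj).symm)
  have hT : ∀ᵐ ω ∂P[|T], d i ω = e ∧ d j ω = e :=
    ae_cond_mem ((hd i (measurableSet_singleton e)).inter (hd j (measurableSet_singleton e)))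
  have hεi : ε i j =ᵐ[P[|T]] fun ω => Y i ω - μ i j e e :=
    hT.mono fun ω ⟨hi, hj⟩ => by rw [hε, hi, hj]
  have hεj : ε j i =ᵐ[P[|T]] fun ω => Y j ω - μ j i e e :=
    hT.mono fun ω ⟨hi, hj⟩ => by rw [hε, hi, hj]
  rw [condCov, ← cov, cov_congr_ae hεi hεj, cov_sub_const_sub_const
    (memLp_cond_of_abs_le (hY i) (hbdd i) T 2) (memLp_cond_of_abs_le (hY j) (hbdd j) T 2)]

end Exposures

theorem rmse_horvitz_thompson_le_general
    {Ω : Type*} [MeasurableSpace Ω] (P : Measure Ω) [IsProbabilityMeasure P]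
    {Δ : Type*} [DecidableEq Δ] [MeasurableSpace Δ] [MeasurableSingletonClass Δ]
    (n : ℕ) (d : Fin n → Ω → Δ) (Y : Fin n → Ω → ℝ)
    (hd : ∀ i, Measurable (d i)) (hY : ∀ i, Measurable (Y i))
    (k₁ k₂ : ℝ) (hbdd : ∀ i, ∀ᵐ ω ∂P, |Y i ω| ≤ k₁)
    (a b : Δ)
    -- assignment probabilities `pᵢ(e) = P(dᵢ = e)`
    (p : Fin n → Δ → ℝ) (hp : ∀ i e, p i e = (P {ω | d i ω = e}).toReal)
    -- bounded inverse assignment probabilities for the exposures `a` and `b`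
    (hk₂ : ∀ i, ∀ e ∈ ({a, b} : Set Δ), 1 / p i e ≤ k₂)
    -- joint positivity for the exposures `a` and `b`
    (hpos : ∀ i j : Fin n, i ≠ j → ∀ e ∈ ({a, b} : Set Δ),
      0 < P ({ω | d i ω = e} ∩ {ω | d j ω = e}))
    -- conditional expected outcomes `ȳᵢ(e) = E[Yᵢ | dᵢ = e]` (zero for null events)
    (ybar : Fin n → Δ → ℝ)
    (hybar : ∀ i e, ybar i e = ∫ ω, Y i ω ∂(P[|{ω | d i ω = e}]))
    -- pairwise conditional means `μ̄ᵢⱼ(e₁,e₂) = E[Yᵢ | dᵢ = e₁, dⱼ = e₂]`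
    (μbar : Fin n → Fin n → Δ → Δ → ℝ)
    (hμbar : ∀ i j e₁ e₂,
      μbar i j e₁ e₂ = ∫ ω, Y i ω ∂(P[|{ω | d i ω = e₁} ∩ {ω | d j ω = e₂}]))
    -- systematic part of the error: `ε̃ᵢⱼ(e₁,e₂) = μ̄ᵢⱼ(e₁,e₂) − ȳᵢ(e₁)`
    (εtilde : Fin n → Fin n → Δ → Δ → ℝ)
    (hεtilde : ∀ i j e₁ e₂, εtilde i j e₁ e₂ = μbar i j e₁ e₂ - ybar i e₁)
    -- idiosyncratic part of the error: `ε̇ᵢⱼ = Yᵢ − μ̄ᵢⱼ(dᵢ, dⱼ)`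
    (εdot : Fin n → Fin n → Ω → ℝ)
    (hεdot : ∀ i j ω, εdot i j ω = Y i ω - μbar i j (d i ω) (d j ω))
    -- the design-dependence term `C(e)`
    (Cdep : Δ → ℝ)
    (hCdep : ∀ e, Cdep e = (1 / (n : ℝ) ^ 2) * ∑ i, ∑ j ∈ Finset.univ.erase i,
      |cov P (fun ω => if d i ω = e then (1 : ℝ) else 0)
        (fun ω => if d j ω = e then (1 : ℝ) else 0)|)
    -- the correlated-error term `E(e)`
    (Edep : Δ → ℝ)
    (hEdep : ∀ e, Edep e = (1 / (n : ℝ) ^ 2) * ∑ i, ∑ j ∈ Finset.univ.erase i,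
      εtilde i j e e * εtilde j i e e)
    -- the unit-error term `U(e)`
    (Udep : Δ → ℝ)
    (hUdep : ∀ e, Udep e = (1 / (n : ℝ) ^ 2) * ∑ i, ∑ j ∈ Finset.univ.erase i,
      condCov P ({ω | d i ω = e} ∩ {ω | d j ω = e}) (εdot i j) (εdot j i))
    -- the estimand `τ̄ = (1/n)Σᵢ (ȳᵢ(a) − ȳᵢ(b))`
    (τbar : ℝ) (hτbar : τbar = (1 / (n : ℝ)) * ∑ i, (ybar i a - ybar i b))
    -- the Horvitz–Thompson estimator
    (τhat : Ω → ℝ)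
    (hτhat : ∀ ω, τhat ω = (1 / (n : ℝ)) * ∑ i,
      ((if d i ω = a then Y i ω else 0) / p i a - (if d i ω = b then Y i ω else 0) / p i b)) :
    Real.sqrt (∫ ω, (τhat ω - τbar) ^ 2 ∂P)
      ≤ 3 * k₁ * Real.sqrt (k₂ / n)
        + 5 * k₁ * k₂ * (Real.sqrt (Cdep a) + Real.sqrt (Cdep b))
        + 2 * (Real.sqrt (max (Edep a) 0) + Real.sqrt (max (Edep b) 0)
            + Real.sqrt (max (Udep a) 0) + Real.sqrt (max (Udep b) 0)) := by
  rcases Nat.eq_zero_or_pos n with rfl | hn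
  · simp [hτhat, hτbar, hCdep, hEdep, hUdep]
  have : Nonempty (Fin n) := ⟨⟨0, hn⟩⟩
  set S : Δ → Fin n → Set Ω := fun e i => {ω | d i ω = e}
  have hS : ∀ e i, MeasurableSet (S e i) := fun e i => hd i (measurableSet_singleton e)
  have hYm : ∀ i, AEStronglyMeasurable (Y i) P := fun i => (hY i).aestronglyMeasurable
  have hbound : ∀ e ∈ ({a, b} : Set Δ), √(∫ ω, (htError P (S e) Y ω / n) ^ 2 ∂P)
      ≤ √2 * k₁ * √(k₂ / n) + 3 * k₁ * k₂ * √(Cdep e) + √(max (Edep e) 0)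
        + √(max (Udep e) 0) := by
    intro e he
    have hpos' : ∀ i j, i ≠ j → P (S e i ∩ S e j) ≠ 0 := fun i j hij => (hpos i j hij e he).ne'
    have hC : Cdep e = designDependence P (S e) / n ^ 2 := by
      rw [hCdep, designDependence_setOf_eq, one_div_mul_eq_div]
    have hE : Edep e = correlatedError P (S e) Y / n ^ 2 := by
      simp_rw [hEdep, hεtilde, hμbar, hybar, correlatedError, one_div_mul_eq_div]
      rfl
    have hU : Udep e = unitError P (S e) Y / n ^ 2 := by
      rw [hUdep, unitError_setOf_eq hd hYm hbdd hpos' hεdot, one_div_mul_eq_div]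
    have h := sqrt_integral_htError_div_sq_le (hS e) hYm hbdd
      (fun i => by have h := hk₂ i e he; rw [one_div, hp] at h; exact h) hpos'
    rwa [Fintype.card_fin, ← hC, ← hE, ← hU] at h
  have hsplit : ∀ ω, τhat ω - τbar = htError P (S a) Y ω / n - htError P (S b) Y ω / n := by
    intro ω
    simp only [hτhat, hτbar, htError, hp, hybar, sum_sub_distrib, measureReal_def, S,
      Set.indicator_apply, Set.mem_ofPred_eq]
    ring
  have hYL2 : ∀ i, MemLp (Y i) 2 P := fun i => MemLp.of_bound (hYm i) k₁ (hbdd i)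
  calc √(∫ ω, (τhat ω - τbar) ^ 2 ∂P)
      ≤ √(∫ ω, (htError P (S a) Y ω / n) ^ 2 ∂P) + √(∫ ω, (htError P (S b) Y ω / n) ^ 2 ∂P) := by
        simp_rw [hsplit]
        exact sqrt_integral_sub_sq_le ((memLp_htError (hS a) hYL2).mul_const (n : ℝ)⁻¹)
          ((memLp_htError (hS b) hYL2).mul_const (n : ℝ)⁻¹)
    _ ≤ _ := add_le_add (hbound a (by simp)) (hbound b (by simp))
    _ ≤ _ := by
      obtain ⟨ω, hω⟩ := (hbdd ⟨0, hn⟩).exists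
      have hk₁ : 0 ≤ k₁ := (abs_nonneg _).trans hω
      have hk₂' : 0 ≤ k₂ := le_trans (by rw [hp]; positivity) (hk₂ ⟨0, hn⟩ a (by simp))
      have h2 := mul_le_mul_of_nonneg_right Real.sqrt_two_lt_three_halves.le
        (mul_nonneg hk₁ (Real.sqrt_nonneg (k₂ / n)))
      have hCa := mul_nonneg (mul_nonneg hk₁ hk₂') (Real.sqrt_nonneg (Cdep a))
      have hCb := mul_nonneg (mul_nonneg hk₁ hk₂') (Real.sqrt_nonneg (Cdep b))
      linarith [Real.sqrt_nonneg (max (Edep a) 0), Real.sqrt_nonneg (max (Edep b) 0),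
        Real.sqrt_nonneg (max (Udep a) 0), Real.sqrt_nonneg (max (Udep b) 0)]

/-- Root-mean-square-error bound for the Horvitz–Thompson estimator:
`√E[(τ̂ − τ̄)²] ≤ 3k₁√(k₂/n) + 5k₁k₂(√C(a) + √C(b))
  + 2(√[E(a)]⁺ + √[E(b)]⁺ + √[U(a)]⁺ + √[U(b)]⁺)`. -/
theorem rmse_horvitz_thompson_le
    {Ω : Type*} [MeasurableSpace Ω] (P : Measure Ω) [IsProbabilityMeasure P]
    {Δ : Type*} [Fintype Δ] [DecidableEq Δ] [MeasurableSpace Δ] [MeasurableSingletonClass Δ]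
    (n : ℕ) (d : Fin n → Ω → Δ) (Y : Fin n → Ω → ℝ)
    (hd : ∀ i, Measurable (d i)) (hY : ∀ i, Measurable (Y i))
    (k₁ k₂ : ℝ) (hbdd : ∀ i, ∀ᵐ ω ∂P, |Y i ω| ≤ k₁)
    (a b : Δ)
    -- assignment probabilities `pᵢ(e) = P(dᵢ = e)`
    (p : Fin n → Δ → ℝ) (hp : ∀ i e, p i e = (P {ω | d i ω = e}).toReal)
    -- bounded inverse assignment probabilities for the exposures `a` and `b`
    (hk₂ : ∀ i, ∀ e ∈ ({a, b} : Set Δ), 1 / p i e ≤ k₂)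
    -- joint positivity for the exposures `a` and `b`
    (hpos : ∀ i j : Fin n, i ≠ j → ∀ e ∈ ({a, b} : Set Δ),
      0 < P ({ω | d i ω = e} ∩ {ω | d j ω = e}))
    -- conditional expected outcomes `ȳᵢ(e) = E[Yᵢ | dᵢ = e]` (zero for null events)
    (ybar : Fin n → Δ → ℝ)
    (hybar : ∀ i e, ybar i e = ∫ ω, Y i ω ∂(P[|{ω | d i ω = e}]))
    -- pairwise conditional means `μ̄ᵢⱼ(e₁,e₂) = E[Yᵢ | dᵢ = e₁, dⱼ = e₂]`
    (μbar : Fin n → Fin n → Δ → Δ → ℝ)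
    (hμbar : ∀ i j e₁ e₂,
      μbar i j e₁ e₂ = ∫ ω, Y i ω ∂(P[|{ω | d i ω = e₁} ∩ {ω | d j ω = e₂}]))
    -- systematic part of the error: `ε̃ᵢⱼ(e₁,e₂) = μ̄ᵢⱼ(e₁,e₂) − ȳᵢ(e₁)`
    (εtilde : Fin n → Fin n → Δ → Δ → ℝ)
    (hεtilde : ∀ i j e₁ e₂, εtilde i j e₁ e₂ = μbar i j e₁ e₂ - ybar i e₁)
    -- idiosyncratic part of the error: `ε̇ᵢⱼ = Yᵢ − μ̄ᵢⱼ(dᵢ, dⱼ)`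
    (εdot : Fin n → Fin n → Ω → ℝ)
    (hεdot : ∀ i j ω, εdot i j ω = Y i ω - μbar i j (d i ω) (d j ω))
    -- the design-dependence term `C(e)`
    (Cdep : Δ → ℝ)
    (hCdep : ∀ e, Cdep e = (1 / (n : ℝ) ^ 2) * ∑ i, ∑ j ∈ Finset.univ.erase i,
      |cov P (fun ω => if d i ω = e then (1 : ℝ) else 0)
        (fun ω => if d j ω = e then (1 : ℝ) else 0)|)
    -- the correlated-error term `E(e)`
    (Edep : Δ → ℝ)
    (hEdep : ∀ e, Edep e = (1 / (n : ℝ) ^ 2) * ∑ i, ∑ j ∈ Finset.univ.erase i,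
      εtilde i j e e * εtilde j i e e)
    -- the unit-error term `U(e)`
    (Udep : Δ → ℝ)
    (hUdep : ∀ e, Udep e = (1 / (n : ℝ) ^ 2) * ∑ i, ∑ j ∈ Finset.univ.erase i,
      condCov P ({ω | d i ω = e} ∩ {ω | d j ω = e}) (εdot i j) (εdot j i))
    -- the estimand `τ̄ = (1/n)Σᵢ (ȳᵢ(a) − ȳᵢ(b))`
    (τbar : ℝ) (hτbar : τbar = (1 / (n : ℝ)) * ∑ i, (ybar i a - ybar i b))
    -- the Horvitz–Thompson estimator
    (τhat : Ω → ℝ)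
    (hτhat : ∀ ω, τhat ω = (1 / (n : ℝ)) * ∑ i,
      ((if d i ω = a then Y i ω else 0) / p i a - (if d i ω = b then Y i ω else 0) / p i b)) :
    Real.sqrt (∫ ω, (τhat ω - τbar) ^ 2 ∂P)
      ≤ 3 * k₁ * Real.sqrt (k₂ / n)
        + 5 * k₁ * k₂ * (Real.sqrt (Cdep a) + Real.sqrt (Cdep b))
        + 2 * (Real.sqrt (max (Edep a) 0) + Real.sqrt (max (Edep b) 0)
            + Real.sqrt (max (Udep a) 0) + Real.sqrt (max (Udep b) 0)) :=
  rmse_horvitz_thompson_le_general P n d Y hd hY k₁ k₂ hbdd a b p hp hk₂ hpos ybar hybar μbar hμbar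
    εtilde hεtilde εdot hεdot Cdep hCdep Edep hEdep Udep hUdep τbar hτbar τhat hτhat
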